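/- Under the deterministic UCB1 setup, suppose that for every arm i the empirical means μ̂ i t are uniformly bounded in t, and that the selection sequence obeys the UCB1 rule with constant C > 0. Then every arm is pulled infinitely often, i.e., for every arm i, T i n → ∞ as n → ∞. -/

import Mathlib

open Finset Filter

/-- Number of pulls of arm `i` among rounds `1, …, t`. -/
noncomputable def pullCount {K : ℕ} (I : ℕ → Fin K) (i : Fin K) (t : ℕ) : ℕ :=
  ((Finset.Icc 1 t).filter (fun s => I s = i)).card

/-- Empirical mean of arm `i` after round `t` (equal to `0` when the arm was never pulled). -/
noncomputable def empMean {K : ℕ} (x : Fin K → ℕ → ℝ) (I : ℕ → Fin K) (i : Fin K) (t : ℕ) : ℝ :=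
  if pullCount I i t = 0 then 0
  else (1 / (pullCount I i t : ℝ)) * ∑ u ∈ Finset.Icc 1 (pullCount I i t), x i u

/-- The selection sequence `I` obeys the UCB1 rule with constant `C`. -/
def UCB1Rule {K : ℕ} (x : Fin K → ℕ → ℝ) (I : ℕ → Fin K) (C : ℝ) : Prop :=
  ∀ t : ℕ, 1 ≤ t →
    if ∃ i : Fin K, pullCount I i (t - 1) = 0 then pullCount I (I t) (t - 1) = 0
    else ∀ j : Fin K,
      empMean x I j (t - 1) + Real.sqrt (C * Real.log t / (pullCount I j (t - 1) : ℝ))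
        ≤ empMean x I (I t) (t - 1)
            + Real.sqrt (C * Real.log t / (pullCount I (I t) (t - 1) : ℝ))

lemma pullCount_mono {K : ℕ} (I : ℕ → Fin K) (i : Fin K) : Monotone (pullCount I i) :=
  fun _ _ hab => Finset.card_le_card
    (Finset.filter_subset_filter _ (Finset.Icc_subset_Icc_right hab))

lemma pullCount_succ {K : ℕ} (I : ℕ → Fin K) (i : Fin K) (t : ℕ) :
    pullCount I i (t + 1) = pullCount I i t + if I (t + 1) = i then 1 else 0 := by
  unfold pullCount
  have h : Finset.Icc 1 (t + 1) = insert (t + 1) (Finset.Icc 1 t) := by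
    ext s; simp only [Finset.mem_Icc, Finset.mem_insert]; omega
  rw [h, Finset.filter_insert]
  by_cases hI : I (t + 1) = i
  · rw [if_pos hI, if_pos hI, Finset.card_insert_of_notMem (by simp)]
  · rw [if_neg hI, if_neg hI, add_zero]

lemma sum_pullCount {K : ℕ} (I : ℕ → Fin K) (t : ℕ) :
    ∑ j : Fin K, pullCount I j t = t := by
  have h := Finset.card_eq_sum_card_fiberwise
    (fun s (_ : s ∈ Finset.Icc 1 t) => Finset.mem_univ (I s))
  simpa [pullCount, Nat.card_Icc] using h.symm

theorem ucb1_every_arm_pulled_infinitely_often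
    {K : ℕ} (hK : 2 ≤ K) (x : Fin K → ℕ → ℝ) (I : ℕ → Fin K)
    (B : ℝ) (hbdd : ∀ (i : Fin K) (t : ℕ), |empMean x I i t| ≤ B)
    (C : ℝ) (hC : 0 < C)
    (hUCB : UCB1Rule x I C) :
    ∀ i : Fin K, Tendsto (fun n : ℕ => pullCount I i n) atTop atTop := by
  intro i
  by_contra hcon
  have hmono : Monotone fun n => pullCount I i n := pullCount_mono I i
  have hbound : ∃ b, ∀ n, pullCount I i n < b := by
    rw [tendsto_atTop_atTop] at hcon
    push_neg at hcon
    obtain ⟨b, hb⟩ := hcon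
    exact ⟨b, fun n => by
      obtain ⟨n', hn', hlt⟩ := hb n
      exact lt_of_le_of_lt (hmono hn') hlt⟩
  obtain ⟨b, hb⟩ := hbound
  set m := sSup (Set.range fun n => pullCount I i n) with hm
  have hbdd' : BddAbove (Set.range fun n => pullCount I i n) :=
    ⟨b, fun y ⟨n, hn⟩ => hn ▸ (hb n).le⟩
  obtain ⟨T0, hT0⟩ := Nat.sSup_mem (Set.range_nonempty _) hbdd'
  have hle : ∀ n, pullCount I i n ≤ m := fun n => le_csSup hbdd' ⟨n, rfl⟩
  have hconst : ∀ t, T0 ≤ t → pullCount I i t = m :=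
    fun t ht => le_antisymm (hle t) (le_trans (le_of_eq hT0.symm) (hmono ht))
  have hB : 0 ≤ B := (abs_nonneg _).trans (hbdd i 0)
  have hlog : Tendsto (fun t : ℕ => C * Real.log t) atTop atTop :=
    (Real.tendsto_log_atTop.comp tendsto_natCast_atTop_atTop).const_mul_atTop hC
  obtain ⟨N, hN⟩ := (hlog.eventually_gt_atTop (16 * B ^ 2 * m)).exists_forall_of_atTop
  set T1 := max N (max (T0 + 1) 2) with hT1def
  -- Key claim: for t ≥ T1, the pulled arm had at most 4m pulls
  have key : ∀ t, T1 ≤ t → pullCount I (I t) (t - 1) ≤ 4 * m := by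
    intro t ht
    have ht2 : 2 ≤ t := le_trans (le_max_of_le_right (le_max_right _ _)) ht
    have ht1 : 1 ≤ t := by omega
    have hT0t : T0 ≤ t - 1 := by
      have := le_trans (le_max_of_le_right (le_max_left _ _)) ht; omega
    have hu := hUCB t ht1
    by_cases hz : ∃ k : Fin K, pullCount I k (t - 1) = 0
    · rw [if_pos hz] at hu; omega
    · rw [if_neg hz] at hu
      push_neg at hz
      by_contra hbig
      push_neg at hbig
      have hm1 : 1 ≤ m := by
        have h0 := hz i
        rw [hconst (t - 1) hT0t] at h0
        omega
      have hmR : (1 : ℝ) ≤ (m : ℝ) := by exact_mod_cast hm1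
      have hi := hu i
      rw [hconst (t - 1) hT0t] at hi
      have hlogpos : 0 < Real.log t := Real.log_pos (by exact_mod_cast ht2)
      have hCl : 0 < C * Real.log t := mul_pos hC hlogpos
      have hgt := hN t (le_trans (le_max_left _ _) ht)
      set T := pullCount I (I t) (t - 1) with hT
      have hTR : (4 * (m : ℝ)) ≤ (T : ℝ) := by
        have : (4 * m : ℕ) ≤ T := hbig.le
        exact_mod_cast this
      set S := Real.sqrt (C * Real.log t / (4 * (m : ℝ))) with hS
      have hS2 : 2 * B < S := by
        rw [hS, Real.lt_sqrt (by positivity)]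
        rw [lt_div_iff₀ (by positivity)]
        nlinarith
      have hsplit : Real.sqrt (C * Real.log t / (m : ℝ)) = 2 * S := by
        rw [show C * Real.log t / (m : ℝ) = 4 * (C * Real.log t / (4 * (m : ℝ))) by
          field_simp]
        rw [Real.sqrt_mul (by norm_num)]
        rw [show Real.sqrt 4 = 2 by
          rw [show (4 : ℝ) = 2 ^ 2 by norm_num, Real.sqrt_sq (by norm_num)]]
      have hTle : Real.sqrt (C * Real.log t / (T : ℝ)) ≤ S := by
        apply Real.sqrt_le_sqrt
        exact div_le_div_of_nonneg_left hCl.le (by positivity) hTR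
      have h1 := abs_le.mp (hbdd i (t - 1))
      have h2 := abs_le.mp (hbdd (I t) (t - 1))
      rw [hsplit] at hi
      linarith
  -- Every arm's pull count is bounded
  have bnd : ∀ t, T1 ≤ t → ∀ j, pullCount I j t ≤ max (pullCount I j T1) (4 * m + 1) := by
    intro t ht
    induction t, ht using Nat.le_induction with
    | base => intro j; exact le_max_left _ _
    | succ t ht ih =>
      intro j
      rw [pullCount_succ]
      by_cases hj : I (t + 1) = j
      · rw [if_pos hj]
        have hk := key (t + 1) (by omega)
        simp only [Nat.add_sub_cancel] at hk
        rw [hj] at hk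
        exact le_max_of_le_right (by omega)
      · rw [if_neg hj, add_zero]; exact ih j
  set Sm := ∑ j : Fin K, max (pullCount I j T1) (4 * m + 1) with hSm
  have hfinal : ∀ t, T1 ≤ t → t ≤ Sm := by
    intro t ht
    calc t = ∑ j : Fin K, pullCount I j t := (sum_pullCount I t).symm
    _ ≤ Sm := Finset.sum_le_sum fun j _ => bnd t ht j
  have h1 := hfinal (max T1 (Sm + 1)) (le_max_left _ _)
  have h2 : Sm + 1 ≤ max T1 (Sm + 1) := le_max_right _ _
  omega
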